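/- arXiv:1604.08733 — 2 statements merged into one kernel-verified Lean document; each statement's English description precedes it below -/
import Mathlib

section
/- Let D be a strongly connected balanced bipartite digraph of order 2a ≥ 8 with partite sets X and Y. If max{d(x), d(y)} ≥ 2a − 1 for every dominating pair of vertices {x, y}, then the underlying undirected graph UG(D) is 2-connected. -/
open Finset

variable {V : Type*}

/-- Total degree (out-degree plus in-degree) of `x` in the digraph with arc relation `A`. -/
noncomputable def deg (A : V → V → Prop) (x : V) : ℕ :=
  Set.ncard {y | A x y} + Set.ncard {y | A y x}

/-- The digraph with arc relation `A` is strongly connected. -/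
def StrongConn (A : V → V → Prop) : Prop :=
  ∀ u v : V, Relation.ReflTransGen A u v

/-- `{x, y}` is a dominating pair: distinct vertices with a common out-neighbour. -/
def DomPair (A : V → V → Prop) (x y : V) : Prop :=
  x ≠ y ∧ ∃ z, A x z ∧ A y z

/-- `X, Y` is a bipartition of the digraph `A`: the two parts partition the vertex
set and every arc joins the two parts. -/
def IsBipartition (A : V → V → Prop) (X Y : Set V) : Prop :=
  Disjoint X Y ∧ X ∪ Y = Set.univ ∧
    ∀ u v, A u v → (u ∈ X ∧ v ∈ Y) ∨ (u ∈ Y ∧ v ∈ X)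

/-- The underlying undirected graph of the digraph `A`. -/
def UG (A : V → V → Prop) : SimpleGraph V where
  Adj u v := u ≠ v ∧ (A u v ∨ A v u)
  symm := by constructor; intro u v h; exact ⟨h.1.symm, h.2.symm⟩
  loopless := by constructor; intro v h; exact h.1 rfl

/-- A graph on a finite vertex set is 2-connected if it has at least 3 vertices and
deleting any single vertex leaves a connected graph. -/
def TwoConnected [Fintype V] (G : SimpleGraph V) : Prop :=
  3 ≤ Fintype.card V ∧ ∀ v : V, (G.induce {u : V | u ≠ v}).Connected


/-!
Suppose `v` is a cut vertex of `UG(D)`, say `v ∈ X`, splitting the other vertices into sides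
`S` and `T` with no arcs between them. Strong connectivity gives arcs `s → v` and `t → v` with
`s ∈ S`, `t ∈ T`; both lie in `Y`, and `{s, t}` is a dominating pair, so one of them, say `s`,
has degree `≥ 2a − 1`. A vertex of `Y ∩ S` only sees `v` and `X ∩ S`, and `|X ∩ S| + |X ∩ T| = a − 1`,
so `X ∩ T = ∅`. Then `t` sees only `v`, so `d(t) ≤ 2`. Every in-neighbour `z ≠ v` of `s` lies in
`X ∩ S`, misses `t`, hence has `d(z) ≤ 2a − 2`; two of them would be a dominating pair violating
the hypothesis. So `d(s) ≤ a + 2 < 2a − 1` as `a ≥ 4`, a contradiction.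
-/

section Digraph

variable {A : V → V → Prop}

lemma Relation.ReflTransGen.exists_arc_of_mem_of_notMem {S : Set V} {s t : V}
    (h : Relation.ReflTransGen A s t) (hs : s ∈ S) (ht : t ∉ S) :
    ∃ p ∈ S, ∃ q ∉ S, A p q := by
  induction h with
  | refl => exact absurd hs ht
  | @tail b c _ hbc ih =>
      by_cases hb : b ∈ S
      · exact ⟨b, hb, c, ht, hbc⟩
      · exact ih hb

lemma deg_le_ncard_add_ncard [Finite V] {u : V} {N M : Set V}
    (hout : {y | A u y} ⊆ N) (hin : {y | A y u} ⊆ M) :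
    deg A u ≤ N.ncard + M.ncard :=
  add_le_add (Set.ncard_le_ncard hout N.toFinite) (Set.ncard_le_ncard hin M.toFinite)

lemma deg_le_two_mul_ncard [Finite V] {u : V} {N : Set V}
    (h : ∀ z, A u z ∨ A z u → z ∈ N) : deg A u ≤ 2 * N.ncard := by
  have := deg_le_ncard_add_ncard (A := A) (fun z hz => h z (Or.inl hz))
    (fun z hz => h z (Or.inr hz))
  omega

lemma subsingleton_setOf_arc_deg_lt {b : ℕ}
    (hdeg : ∀ x y : V, DomPair A x y → b ≤ max (deg A x) (deg A y)) (y : V) :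
    {z | A z y ∧ deg A z < b}.Subsingleton := by
  intro x hx x' hx'
  by_contra hne
  have := hdeg x x' ⟨hne, y, hx.1, hx'.1⟩
  exact (max_lt hx.2 hx'.2).not_ge this

end Digraph

namespace IsBipartition

variable {A : V → V → Prop} {X Y : Set V}

lemma symm (h : IsBipartition A X Y) : IsBipartition A Y X :=
  ⟨h.1.symm, by rw [Set.union_comm, h.2.1], fun u w huw => (h.2.2 u w huw).symm⟩

lemma notMem_right (h : IsBipartition A X Y) {u : V} (hu : u ∈ X) : u ∉ Y :=
  Set.disjoint_left.mp h.1 hu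

lemma mem_right_of_arc (h : IsBipartition A X Y) {u z : V} (hu : u ∈ X)
    (hz : A u z ∨ A z u) : z ∈ Y := by
  rcases hz with hz | hz
  · exact (h.2.2 u z hz).resolve_right (fun h' => h.notMem_right hu h'.1) |>.2
  · exact (h.2.2 z u hz).resolve_left (fun h' => h.notMem_right hu h'.2) |>.1

lemma mem_left_of_arc (h : IsBipartition A X Y) {u z : V} (hu : u ∈ Y)
    (hz : A u z ∨ A z u) : z ∈ X :=
  h.symm.mem_right_of_arc hu hz

lemma card_eq [Fintype V] (h : IsBipartition A X Y) :
    Fintype.card V = X.ncard + Y.ncard := by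
  rw [← Nat.card_eq_fintype_card, ← Set.ncard_univ, ← h.2.1]
  exact Set.ncard_union_eq h.1 X.toFinite Y.toFinite

lemma deg_le_of_not_arc [Finite V] (h : IsBipartition A X Y) {w y : V} (hw : w ∈ X)
    (hy : y ∈ Y) (hwy : ¬ A w y ∧ ¬ A y w) : deg A w ≤ 2 * (Y.ncard - 1) := by
  rw [← Set.ncard_sdiff_singleton_of_mem hy]
  refine deg_le_two_mul_ncard fun z hz => ⟨h.mem_right_of_arc hw hz, ?_⟩
  rintro rfl
  tauto

end IsBipartition

structure IsSeparation (A : V → V → Prop) (v : V) (S T : Set V) : Prop where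
  notMem_left : v ∉ S
  notMem_right : v ∉ T
  disjoint : Disjoint S T
  mem_or_mem : ∀ u, u ≠ v → u ∈ S ∨ u ∈ T
  no_arc : ∀ p ∈ S, ∀ q ∈ T, ¬ A p q ∧ ¬ A q p
  left_nonempty : S.Nonempty
  right_nonempty : T.Nonempty

namespace IsSeparation

variable {A : V → V → Prop} {v : V} {S T : Set V}

lemma symm (h : IsSeparation A v S T) : IsSeparation A v T S where
  notMem_left := h.notMem_right
  notMem_right := h.notMem_left
  disjoint := h.disjoint.symm
  mem_or_mem u hu := (h.mem_or_mem u hu).symm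
  no_arc p hp q hq := (h.no_arc q hq p hp).symm
  left_nonempty := h.right_nonempty
  right_nonempty := h.left_nonempty

lemma eq_or_mem_of_arc (h : IsSeparation A v S T) {u z : V} (hu : u ∈ S)
    (hz : A u z ∨ A z u) : z = v ∨ z ∈ S := by
  by_contra! hzS
  rcases (h.mem_or_mem z hzS.1).resolve_left hzS.2 |> h.no_arc u hu z with ⟨h1, h2⟩
  tauto

lemma exists_arc_to (h : IsSeparation A v S T) (hstrong : StrongConn A) :
    ∃ p ∈ S, A p v := by
  obtain ⟨s, hs⟩ := h.left_nonempty
  obtain ⟨t, ht⟩ := h.right_nonempty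
  obtain ⟨p, hp, q, hq, hpq⟩ :=
    (hstrong s t).exists_arc_of_mem_of_notMem hs (Set.disjoint_right.mp h.disjoint ht)
  refine ⟨p, hp, ?_⟩
  rcases h.eq_or_mem_of_arc hp (Or.inl hpq) with rfl | hqS
  · exact hpq
  · exact absurd hqS hq

variable {X Y : Set V}

lemma ncard_inter_add_ncard_inter_lt [Finite V] (h : IsSeparation A v S T) (hv : v ∈ X) :
    (S ∩ X).ncard + (T ∩ X).ncard < X.ncard := by
  rw [← Set.ncard_union_eq (h.disjoint.mono Set.inter_subset_left Set.inter_subset_left)]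
  refine Set.ncard_lt_ncard ⟨?_, fun hsub => ?_⟩
  · rintro u (hu | hu) <;> exact hu.2
  · rcases hsub hv with hvS | hvT
    exacts [h.notMem_left hvS.1, h.notMem_right hvT.1]

lemma deg_le_of_mem [Finite V] (h : IsSeparation A v S T) (hbip : IsBipartition A X Y)
    {w : V} (hw : w ∈ S) (hwY : w ∈ Y) :
    deg A w ≤ 2 * ((S ∩ X).ncard + 1) := by
  have hnbr : ∀ z, A w z ∨ A z w → z ∈ insert v (S ∩ X) := fun z hz =>
    (h.eq_or_mem_of_arc hw hz).imp id fun hzS => ⟨hzS, hbip.mem_left_of_arc hwY hz⟩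
  have := Set.ncard_insert_le v (S ∩ X)
  have := deg_le_two_mul_ncard hnbr
  omega

lemma inter_eq_empty_of_deg [Finite V] (h : IsSeparation A v S T) (hbip : IsBipartition A X Y)
    (hv : v ∈ X) {s : V} (hs : s ∈ S) (hsY : s ∈ Y) (hdeg : 2 * X.ncard - 1 ≤ deg A s) :
    T ∩ X = ∅ := by
  have := h.deg_le_of_mem hbip hs hsY
  have := h.ncard_inter_add_ncard_inter_lt hv
  exact (Set.ncard_eq_zero (Set.toFinite _)).mp (by omega)

lemma max_deg_lt [Finite V] (h : IsSeparation A v S T) (hbip : IsBipartition A X Y) {a : ℕ}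
    (ha : 4 ≤ a) (hX : X.ncard = a) (hY : Y.ncard = a)
    (hdeg : ∀ x y : V, DomPair A x y → 2 * a - 1 ≤ max (deg A x) (deg A y))
    (hv : v ∈ X) (hTX : T ∩ X = ∅) {s t : V} (hs : s ∈ S) (hsv : A s v)
    (ht : t ∈ T) (htv : A t v) :
    max (deg A s) (deg A t) < 2 * a - 1 := by
  have hsY : s ∈ Y := hbip.symm.mem_left_of_arc hv (Or.inr hsv)
  have htY : t ∈ Y := hbip.symm.mem_left_of_arc hv (Or.inr htv)
  have hdeg_t : deg A t ≤ 2 * ({v} : Set V).ncard := by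
    refine deg_le_two_mul_ncard fun z hz => ?_
    rcases h.symm.eq_or_mem_of_arc ht hz with rfl | hzT
    · rfl
    · exact (Set.eq_empty_iff_forall_notMem.mp hTX z ⟨hzT, hbip.mem_left_of_arc htY hz⟩).elim
  have hin : {z | A z s} ⊆ insert v {z | A z s ∧ deg A z < 2 * a - 1} := by
    intro z hzs
    refine (h.eq_or_mem_of_arc hs (Or.inr hzs)).imp id fun hzS => ⟨hzs, ?_⟩
    have hzX : z ∈ X := hbip.mem_left_of_arc hsY (Or.inr hzs)
    have := hbip.deg_le_of_not_arc hzX htY (h.no_arc z hzS t ht)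
    omega
  have hout : {z | A s z} ⊆ X := fun z hz => hbip.mem_left_of_arc hsY (Or.inl hz)
  have hsub := Set.ncard_le_one_iff_subsingleton.mpr (subsingleton_setOf_arc_deg_lt hdeg s)
  have := Set.ncard_insert_le v {z | A z s ∧ deg A z < 2 * a - 1}
  have := deg_le_ncard_add_ncard hout hin
  rw [Set.ncard_singleton] at hdeg_t
  exact max_lt (by omega) (by omega)

end IsSeparation

lemma not_isSeparation [Finite V] {A : V → V → Prop} {X Y : Set V} {a : ℕ} (ha : 4 ≤ a)
    (hX : X.ncard = a) (hY : Y.ncard = a) (hbip : IsBipartition A X Y)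
    (hstrong : StrongConn A)
    (hdeg : ∀ x y : V, DomPair A x y → 2 * a - 1 ≤ max (deg A x) (deg A y))
    {v : V} (hv : v ∈ X) (S T : Set V) : ¬ IsSeparation A v S T := by
  intro h
  obtain ⟨s, hs, hsv⟩ := h.exists_arc_to hstrong
  obtain ⟨t, ht, htv⟩ := h.symm.exists_arc_to hstrong
  have hst : s ≠ t := fun hst => Set.disjoint_left.mp h.disjoint hs (hst ▸ ht)
  have hmax := hdeg s t ⟨hst, v, hsv, htv⟩
  have hsY : s ∈ Y := hbip.symm.mem_left_of_arc hv (Or.inr hsv)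
  have htY : t ∈ Y := hbip.symm.mem_left_of_arc hv (Or.inr htv)
  rcases le_max_iff.mp hmax with hs' | ht'
  · have hTX := h.inter_eq_empty_of_deg hbip hv hs hsY (hX ▸ hs')
    exact (h.max_deg_lt hbip ha hX hY hdeg hv hTX hs hsv ht htv).not_ge hmax
  · have hSX := h.symm.inter_eq_empty_of_deg hbip hv ht htY (hX ▸ ht')
    have := h.symm.max_deg_lt hbip ha hX hY hdeg hv hSX ht htv hs hsv
    exact (max_comm (deg A s) (deg A t) ▸ this).not_ge hmax

lemma exists_isSeparation_of_not_connected {A : V → V → Prop} {v u : V} (hu : u ≠ v)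
    (h : ¬ ((UG A).induce {w : V | w ≠ v}).Connected) : ∃ S T, IsSeparation A v S T := by
  set G := (UG A).induce {w : V | w ≠ v}
  have : Nonempty {w : V | w ≠ v} := ⟨⟨u, hu⟩⟩
  obtain ⟨s, t, hst⟩ : ∃ s t, ¬ G.Reachable s t := by
    by_contra! hall
    exact h ⟨fun s t => hall s t⟩
  set S : Set V := {w | ∃ hw : w ≠ v, G.Reachable s ⟨w, hw⟩}
  refine ⟨S, {w | w ≠ v ∧ w ∉ S}, ⟨fun ⟨hv, _⟩ => hv rfl, fun ⟨hv, _⟩ => hv rfl,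
    Set.disjoint_left.mpr fun _ hw hw' => hw'.2 hw, fun w hw => ?_, ?_,
    ⟨s, s.2, .refl s⟩, ⟨t, t.2, fun ⟨_, hr⟩ => hst hr⟩⟩⟩
  · by_cases hwS : w ∈ S
    exacts [Or.inl hwS, Or.inr ⟨hw, hwS⟩]
  · rintro p ⟨hp, hsp⟩ q ⟨hq, hqS⟩
    have hpq : p ≠ q := fun hpq => hqS (hpq ▸ ⟨hp, hsp⟩)
    have hnot : ∀ harc : A p q ∨ A q p, False := fun harc =>
      hqS ⟨hq, hsp.trans (SimpleGraph.Adj.reachable (G := G) (show (UG A).Adj p q from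
        ⟨hpq, harc⟩))⟩
    exact ⟨fun hpq => hnot (Or.inl hpq), fun hqp => hnot (Or.inr hqp)⟩

/-- If `D` is a strongly connected balanced bipartite digraph of order `2a ≥ 8` and
`max {d(x), d(y)} ≥ 2a − 1` for every dominating pair `{x, y}`, then `UG(D)` is
2-connected. -/
theorem stmt1 [Fintype V] (A : V → V → Prop) (X Y : Set V) (a : ℕ) (ha : 4 ≤ a)
    (hX : X.ncard = a) (hY : Y.ncard = a) (hbip : IsBipartition A X Y)
    (hstrong : StrongConn A)
    (hdeg : ∀ x y : V, DomPair A x y → 2 * a - 1 ≤ max (deg A x) (deg A y)) :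
    TwoConnected (UG A) := by
  have hcard : 3 ≤ Fintype.card V := by rw [hbip.card_eq]; omega
  refine ⟨hcard, fun v => ?_⟩
  by_contra hcon
  have : Nontrivial V := Fintype.one_lt_card_iff_nontrivial.mp (by omega)
  obtain ⟨u, hu⟩ := exists_ne v
  obtain ⟨S, T, hsep⟩ := exists_isSeparation_of_not_connected hu hcon
  have hv : v ∈ X ∪ Y := hbip.2.1 ▸ Set.mem_univ v
  rcases hv with hvX | hvY
  · exact not_isSeparation ha hX hY hbip hstrong hdeg hvX S T hsep
  · exact not_isSeparation ha hY hX hbip.symm hstrong hdeg hvY S T hsep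
end

section
/- For every a ≥ 4 there exists a strongly connected balanced bipartite digraph D of order 2a satisfying max{d(x), d(y)} ≥ 2a − 2 for every dominating pair of vertices {x, y}, whose underlying undirected graph is not 2-connected. (Hence condition B_1 in the 2-connectivity lemma cannot be weakened to B_0.) -/
open Finset

variable {V : Type*}

/-!
Every vertex other than `x₀`, `y₀` is joined in both directions to the `a - 1` vertices of the
opposite side other than `x₀`, `y₀`, so its degree is at least `2a - 2`; and `x₀`, `y₀` lie on
opposite sides, so they have no common out-neighbour. Hence every dominating pair contains a vertex
of degree at least `2a - 2`. The digraph is strongly connected through the arcs `x₀ ↔ y₁`, but `y₀`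
is adjacent only to `x₀`, so `x₀` is a cut vertex of the underlying graph.
-/

lemma two_mul_ncard_le_deg [Finite V] {A : V → V → Prop} {w : V} {S : Set V}
    (hout : ∀ v ∈ S, A w v) (hin : ∀ v ∈ S, A v w) : 2 * S.ncard ≤ deg A w := by
  have h₁ := Set.ncard_le_ncard (t := {v | A w v}) hout
  have h₂ := Set.ncard_le_ncard (t := {v | A v w}) hin
  unfold deg
  omega

lemma strongConn_of_forall_reflTransGen {A : V → V → Prop} [Std.Symm A] (r : V)
    (h : ∀ v, Relation.ReflTransGen A r v) : StrongConn A :=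
  fun u v => (Std.Symm.symm _ _ (h u)).trans (h v)

lemma not_twoConnected_of_forall_adj_eq [Fintype V] {G : SimpleGraph V} {u v w : V}
    (huv : u ≠ v) (hwv : w ≠ v) (huw : u ≠ w) (hu : ∀ x, G.Adj u x → x = v) :
    ¬ TwoConnected G := by
  rintro ⟨-, hconn⟩
  have : Nontrivial {x | x ≠ v} := nontrivial_of_ne ⟨u, huv⟩ ⟨w, hwv⟩ (by simpa using huw)
  obtain ⟨x, hx⟩ := (hconn v).preconnected.exists_adj_of_nontrivial ⟨u, huv⟩
  exact x.2 (hu _ hx)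

lemma ncard_setOf_fin_val_mem_Ico {n l u : ℕ} (h : u ≤ n) :
    {v : Fin n | l ≤ (v : ℕ) ∧ (v : ℕ) < u}.ncard = u - l := by
  change (Fin.val ⁻¹' Set.Ico l u).ncard = u - l
  rw [Set.ncard_preimage_of_injective_subset_range Fin.val_injective, Set.ncard_Ico_nat]
  exact fun i hi => ⟨⟨i, by grind⟩, rfl⟩

/-- `CrossAdj a i (a + j)`: the vertices `xᵢ = i` and `yⱼ = a + j` are joined by arcs in both
directions, which happens when `i, j ≠ 0`, or when `i = 0` and `j ≤ 1`. -/
def CrossAdj (a i j : ℕ) : Prop :=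
  i < a ∧ a ≤ j ∧ (i ≠ 0 ∧ j ≠ a ∨ i = 0 ∧ j ≤ a + 1)

def cutVertexDigraph (a : ℕ) (u v : Fin (2 * a)) : Prop :=
  CrossAdj a u v ∨ CrossAdj a v u

namespace cutVertexDigraph

variable {a : ℕ}

instance : Std.Symm (cutVertexDigraph a) := ⟨fun _ _ h => h.symm⟩

lemma isBipartition :
    IsBipartition (cutVertexDigraph a) {v | (v : ℕ) < a} {v | a ≤ (v : ℕ)} := by
  refine ⟨Set.disjoint_left.2 fun v h₁ h₂ => ?_, Set.eq_univ_of_forall fun v => ?_,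
    fun u v h => ?_⟩
  · simp only [Set.mem_ofPred_eq] at h₁ h₂; omega
  · simp only [Set.mem_union, Set.mem_ofPred_eq]; omega
  · simp only [cutVertexDigraph, CrossAdj] at h; simp only [Set.mem_ofPred_eq]; omega

lemma le_deg {w : Fin (2 * a)} (hw₀ : (w : ℕ) ≠ 0) (hwa : (w : ℕ) ≠ a) :
    2 * a - 2 ≤ deg (cutVertexDigraph a) w := by
  have hw := w.isLt
  suffices key : ∀ l u, u ≤ 2 * a → u - l = a - 1 →
      (∀ v : Fin (2 * a), l ≤ (v : ℕ) → (v : ℕ) < u → cutVertexDigraph a w v) →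
      2 * a - 2 ≤ deg (cutVertexDigraph a) w by
    rcases lt_or_ge (w : ℕ) a with h | h
    · exact key (a + 1) (2 * a) le_rfl (by omega) fun v _ _ => by
        simp only [cutVertexDigraph, CrossAdj]; omega
    · exact key 1 a (by omega) (by omega) fun v _ _ => by
        simp only [cutVertexDigraph, CrossAdj]; omega
  intro l u hu hlen hadj
  have := two_mul_ncard_le_deg (S := {v : Fin (2 * a) | l ≤ (v : ℕ) ∧ (v : ℕ) < u})
    (fun v hv => hadj v hv.1 hv.2) (fun v hv => Std.Symm.symm _ _ (hadj v hv.1 hv.2))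
  rw [ncard_setOf_fin_val_mem_Ico hu] at this
  omega

lemma ncard_left : {v : Fin (2 * a) | (v : ℕ) < a}.ncard = a := by
  simpa using ncard_setOf_fin_val_mem_Ico (n := 2 * a) (l := 0) (u := a) (by omega)

lemma ncard_right : {v : Fin (2 * a) | a ≤ (v : ℕ)}.ncard = a := by
  have h := ncard_setOf_fin_val_mem_Ico (n := 2 * a) (l := a) (u := 2 * a) le_rfl
  simp only [Fin.is_lt, and_true] at h
  omega

lemma domPair_ne_x₀_y₀ {x y : Fin (2 * a)} (h : DomPair (cutVertexDigraph a) x y) :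
    (x : ℕ) ≠ 0 ∧ (x : ℕ) ≠ a ∨ (y : ℕ) ≠ 0 ∧ (y : ℕ) ≠ a := by
  obtain ⟨hxy, z, hxz, hyz⟩ := h
  have := Fin.val_injective.ne hxy
  simp only [cutVertexDigraph, CrossAdj] at hxz hyz
  omega

lemma reflTransGen_zero (ha : 2 ≤ a) (v : Fin (2 * a)) :
    Relation.ReflTransGen (cutVertexDigraph a) ⟨0, by omega⟩ v := by
  have hv := v.isLt
  have x₀y₁ : cutVertexDigraph a ⟨0, by omega⟩ ⟨a + 1, by omega⟩ := by
    grind [cutVertexDigraph, CrossAdj]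
  have y₁x₁ : cutVertexDigraph a ⟨a + 1, by omega⟩ ⟨1, by omega⟩ := by
    grind [cutVertexDigraph, CrossAdj]
  rcases lt_trichotomy (v : ℕ) a with h | h | h
  · exact .tail (.single x₀y₁) (by grind [cutVertexDigraph, CrossAdj])
  · exact .single (by grind [cutVertexDigraph, CrossAdj])
  · exact .tail (.tail (.single x₀y₁) y₁x₁) (by grind [cutVertexDigraph, CrossAdj])

lemma strongConn (ha : 2 ≤ a) : StrongConn (cutVertexDigraph a) :=
  strongConn_of_forall_reflTransGen _ (reflTransGen_zero ha)

lemma le_max_deg_of_domPair {x y : Fin (2 * a)} (h : DomPair (cutVertexDigraph a) x y) :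
    2 * a - 2 ≤ max (deg (cutVertexDigraph a) x) (deg (cutVertexDigraph a) y) := by
  rcases domPair_ne_x₀_y₀ h with hx | hy
  · exact (le_deg hx.1 hx.2).trans (le_max_left _ _)
  · exact (le_deg hy.1 hy.2).trans (le_max_right _ _)

lemma not_twoConnected_ug (ha : 2 ≤ a) : ¬ TwoConnected (UG (cutVertexDigraph a)) := by
  refine not_twoConnected_of_forall_adj_eq (u := ⟨a, by omega⟩) (v := ⟨0, by omega⟩)
    (w := ⟨1, by omega⟩) (by grind) (by grind) (by grind) fun x hx => ?_
  obtain ⟨-, h⟩ := hx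
  simp only [cutVertexDigraph, CrossAdj] at h
  exact Fin.ext (by simp only; omega)

end cutVertexDigraph

/-- For every `a ≥ 4` there is a strongly connected balanced bipartite digraph of order
`2a` satisfying `max {d(x), d(y)} ≥ 2a − 2` for every dominating pair, whose underlying
undirected graph is not 2-connected. -/
theorem stmt12 (a : ℕ) (ha : 4 ≤ a) :
    ∃ (A : Fin (2 * a) → Fin (2 * a) → Prop) (X Y : Set (Fin (2 * a))),
      IsBipartition A X Y ∧ X.ncard = a ∧ Y.ncard = a ∧ StrongConn A ∧
      (∀ x y, DomPair A x y → 2 * a - 2 ≤ max (deg A x) (deg A y)) ∧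
      ¬ TwoConnected (UG A) :=
  ⟨cutVertexDigraph a, _, _, cutVertexDigraph.isBipartition, cutVertexDigraph.ncard_left,
    cutVertexDigraph.ncard_right, cutVertexDigraph.strongConn (by omega),
    fun _ _ => cutVertexDigraph.le_max_deg_of_domPair,
    cutVertexDigraph.not_twoConnected_ug (by omega)⟩
end
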